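/- (Theorem 1, convergence of the covariance kernel in expectation.) Let x : ℤ → ℝ be a process that is wide-sense stationary with mean zero and covariance function K satisfying K(0) > 0, and let x(1,·), x(2,·), … be i.i.d. copies of x. Fix a window size d ≥ 1, positions t_1, t_2 ∈ ℤ with r = t_2 − t_1, let X̄_c(t) ∈ ℝ^{cd} be the stacked window vector over c channels, and define ρ_c = X̄_c(t_1) · X̄_c(t_2) / (‖X̄_c(t_1)‖ ‖X̄_c(t_2)‖) when both norms are nonzero and ρ_c = 0 otherwise. Then E[(2/π) arcsin(ρ_c)] converges, as c → ∞, to (2/π) arcsin( K(r) / K(0) ). -/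

import Mathlib

open MeasureTheory ProbabilityTheory Filter Topology

/-- Inner product `X̄_c(t) ⬝ X̄_c(t')` of the stacked window vectors in `ℝ^{cd}`:
the sum over channels `k < c` of the inner products of the window vectors
`(xc k (t), …, xc k (t − d + 1))`. -/
def stackedDot {Ω : Type*} (xc : ℕ → ℤ → Ω → ℝ) (d c : ℕ) (t t' : ℤ) (ω : Ω) : ℝ :=
  ∑ k ∈ Finset.range c, ∑ i ∈ Finset.range d, xc k (t - i) ω * xc k (t' - i) ω

/-- Euclidean norm `‖X̄_c(t)‖` of the stacked window vector. -/
noncomputable def stackedNorm {Ω : Type*} (xc : ℕ → ℤ → Ω → ℝ) (d c : ℕ)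
    (t : ℤ) (ω : Ω) : ℝ :=
  Real.sqrt (stackedDot xc d c t t ω)

/-- Normalized correlation `ρ_c = X̄_c(t₁) ⬝ X̄_c(t₂) / (‖X̄_c(t₁)‖ ‖X̄_c(t₂)‖)` when both
norms are nonzero, and `0` otherwise. -/
noncomputable def stackedCorr {Ω : Type*} (xc : ℕ → ℤ → Ω → ℝ) (d c : ℕ)
    (t₁ t₂ : ℤ) (ω : Ω) : ℝ :=
  if stackedNorm xc d c t₁ ω ≠ 0 ∧ stackedNorm xc d c t₂ ω ≠ 0 then
    stackedDot xc d c t₁ t₂ ω / (stackedNorm xc d c t₁ ω * stackedNorm xc d c t₂ ω)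
  else 0

/-!
Each channel contributes the i.i.d. summand `∑_{i<d} x(t - i) x(t' - i)`, whose mean is
`d K(t - t')`, so by the strong law of large numbers `X̄_c(t) ⬝ X̄_c(t') / c → d K(t - t')`
almost surely. Dividing by the norms, `ρ_c → K(r) / K(0)` almost surely, and since
`(2/π) arcsin` is continuous and bounded by `1`, dominated convergence passes the limit
through the expectation.
-/

/-- `x̄(t) ⬝ x̄(t')` for the path `p`. -/
def windowDot (d : ℕ) (t t' : ℤ) (p : ℤ → ℝ) : ℝ :=
  ∑ i ∈ Finset.range d, p (t - i) * p (t' - i)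

section

variable {Ω : Type*}

/-- The case distinction in `stackedCorr` is invisible in Lean, where `a / 0 = 0`. -/
lemma stackedCorr_eq_div (xc : ℕ → ℤ → Ω → ℝ) (d c : ℕ) (t₁ t₂ : ℤ) (ω : Ω) :
    stackedCorr xc d c t₁ t₂ ω =
      stackedDot xc d c t₁ t₂ ω / (stackedNorm xc d c t₁ ω * stackedNorm xc d c t₂ ω) := by
  unfold stackedCorr
  split_ifs with h
  · rfl
  · rw [not_and_or, not_not, not_not] at h
    rcases h with h | h <;> simp [h]

lemma tendsto_stackedCorr {xc : ℕ → ℤ → Ω → ℝ} {d : ℕ} {t₁ t₂ : ℤ} {ω : Ω} {a b b' : ℝ}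
    (hb : 0 < b) (hb' : 0 < b')
    (h₁₂ : Tendsto (fun c : ℕ => stackedDot xc d c t₁ t₂ ω / c) atTop (𝓝 a))
    (h₁ : Tendsto (fun c : ℕ => stackedDot xc d c t₁ t₁ ω / c) atTop (𝓝 b))
    (h₂ : Tendsto (fun c : ℕ => stackedDot xc d c t₂ t₂ ω / c) atTop (𝓝 b')) :
    Tendsto (fun c => stackedCorr xc d c t₁ t₂ ω) atTop (𝓝 (a / (√b * √b'))) := by
  refine (h₁₂.div (h₁.sqrt.mul h₂.sqrt) (by positivity)).congr' ?_
  filter_upwards [eventually_gt_atTop 0] with c hc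
  have hc : (0 : ℝ) < c := by exact_mod_cast hc
  rw [Pi.div_apply, stackedCorr_eq_div, stackedNorm, stackedNorm, Real.sqrt_div' _ hc.le,
    Real.sqrt_div' _ hc.le, div_mul_div_comm, Real.mul_self_sqrt hc.le,
    div_div_div_cancel_right₀ hc.ne']

variable [MeasurableSpace Ω]

lemma measurable_windowDot (d : ℕ) (t t' : ℤ) : Measurable (windowDot d t t') :=
  Finset.measurable_sum _ fun _ _ => (measurable_pi_apply _).mul (measurable_pi_apply _)

lemma measurable_stackedCorr {xc : ℕ → ℤ → Ω → ℝ} (hxc : ∀ k t, Measurable (xc k t))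
    (d c : ℕ) (t₁ t₂ : ℤ) : Measurable (stackedCorr xc d c t₁ t₂) := by
  have hdot : ∀ t t', Measurable (stackedDot xc d c t t') := fun t t' =>
    Finset.measurable_sum _ fun k _ =>
      (measurable_windowDot d t t').comp (measurable_pi_lambda _ (hxc k))
  have hnorm : ∀ t, Measurable (stackedNorm xc d c t) := fun t =>
    Real.continuous_sqrt.measurable.comp (hdot t t)
  simp_rw [funext (stackedCorr_eq_div xc d c t₁ t₂)]
  exact (hdot t₁ t₂).div ((hnorm t₁).mul (hnorm t₂))

variable {μ : Measure Ω}

lemma integrable_windowDot {X : ℤ → Ω → ℝ} (hX : ∀ t, MemLp (X t) 2 μ) (d : ℕ) (t t' : ℤ) :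
    Integrable (fun ω => windowDot d t t' (fun s => X s ω)) μ :=
  integrable_finsetSum _ fun _ _ => (hX _).integrable_mul (hX _)

lemma integral_windowDot {X : ℤ → Ω → ℝ} {K : ℤ → ℝ} (hX : ∀ t, MemLp (X t) 2 μ)
    (hcov : ∀ t₁ t₂, ∫ ω, X t₁ ω * X t₂ ω ∂μ = K (t₁ - t₂)) (d : ℕ) (t t' : ℤ) :
    ∫ ω, windowDot d t t' (fun s => X s ω) ∂μ = d * K (t - t') := by
  simp only [windowDot]
  rw [integral_finsetSum (f := fun (i : ℕ) ω => X (t - i) ω * X (t' - i) ω) _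
    fun i _ => (hX _).integrable_mul (hX _)]
  simp [hcov]

lemma ae_tendsto_stackedDot_div {X : ℤ → Ω → ℝ} {xc : ℕ → ℤ → Ω → ℝ}
    (hX : ∀ t, MemLp (X t) 2 μ) (hindep : iIndepFun (fun k ω (t : ℤ) => xc k t ω) μ)
    (hident : ∀ k, IdentDistrib (fun ω (t : ℤ) => xc k t ω) (fun ω t => X t ω) μ μ)
    (d : ℕ) (t t' : ℤ) :
    ∀ᵐ ω ∂μ, Tendsto (fun c : ℕ => stackedDot xc d c t t' ω / c) atTop
      (𝓝 (∫ ω, windowDot d t t' (fun s => X s ω) ∂μ)) := by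
  have hident_window : ∀ k, IdentDistrib (fun ω => windowDot d t t' (fun s => xc k s ω))
      (fun ω => windowDot d t t' (fun s => X s ω)) μ μ := fun k =>
    (hident k).comp (measurable_windowDot d t t')
  rw [← (hident_window 0).integral_eq]
  -- `stackedDot xc d c t t' ω` unfolds to `∑ k < c, windowDot d t t' (xc k · ω)`.
  exact strong_law_ae_real _
    ((hident_window 0).integrable_iff.mpr (integrable_windowDot hX d t t'))
    (fun i j hij => (hindep.indepFun hij).comp (measurable_windowDot d t t')
      (measurable_windowDot d t t'))
    (fun k => (hident_window k).trans (hident_window 0).symm)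

end

lemma abs_two_div_pi_mul_arcsin_le_one (y : ℝ) : |2 / Real.pi * Real.arcsin y| ≤ 1 := by
  rw [abs_mul, abs_of_pos (by positivity), div_mul_eq_mul_div, div_le_one Real.pi_pos]
  linarith [abs_le.mpr ⟨Real.neg_pi_div_two_le_arcsin y, Real.arcsin_le_pi_div_two y⟩]

theorem erf_kernel_expectation_tendsto_general
    {Ω : Type*} [MeasurableSpace Ω] (μ : Measure Ω) [IsProbabilityMeasure μ]
    (x : ℤ → Ω → ℝ) (K : ℤ → ℝ)
    (hL2 : ∀ t, MemLp (x t) 2 μ)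
    (hcov : ∀ t₁ t₂, ∫ ω, x t₁ ω * x t₂ ω ∂μ = K (t₁ - t₂))
    (hK0 : 0 < K 0)
    (xc : ℕ → ℤ → Ω → ℝ)
    (hxc_meas : ∀ k t, Measurable (xc k t))
    (hxc_indep : iIndepFun (fun k ω (t : ℤ) => xc k t ω) μ)
    (hxc_copy : ∀ k, Measure.map (fun ω (t : ℤ) => xc k t ω) μ
      = Measure.map (fun ω (t : ℤ) => x t ω) μ)
    (d : ℕ) (hd : 1 ≤ d) (t₁ t₂ : ℤ) :
    Tendsto
      (fun c : ℕ => ∫ ω, (2 / Real.pi) * Real.arcsin (stackedCorr xc d c t₁ t₂ ω) ∂μ)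
      atTop (𝓝 ((2 / Real.pi) * Real.arcsin (K (t₂ - t₁) / K 0))) := by
  have hident : ∀ k, IdentDistrib (fun ω (t : ℤ) => xc k t ω) (fun ω t => x t ω) μ μ :=
    fun k => ⟨(measurable_pi_lambda _ (hxc_meas k)).aemeasurable,
      aemeasurable_pi_lambda _ fun t => (hL2 t).aestronglyMeasurable.aemeasurable, hxc_copy k⟩
  have hdot : ∀ t t', ∀ᵐ ω ∂μ,
      Tendsto (fun c : ℕ => stackedDot xc d c t t' ω / c) atTop (𝓝 (d * K (t - t'))) :=
    fun t t' => by
      simpa only [integral_windowDot hL2 hcov] using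
        ae_tendsto_stackedDot_div hL2 hxc_indep hident d t t'
  have hdK0 : (0 : ℝ) < d * K 0 := mul_pos (by exact_mod_cast hd) hK0
  have hK_symm : K (t₁ - t₂) = K (t₂ - t₁) := by
    rw [← hcov, ← hcov]
    simp only [mul_comm]
  have hcorr : ∀ᵐ ω ∂μ, Tendsto (fun c => stackedCorr xc d c t₁ t₂ ω) atTop
      (𝓝 (K (t₂ - t₁) / K 0)) := by
    filter_upwards [hdot t₁ t₂, hdot t₁ t₁, hdot t₂ t₂] with ω h₁₂ h₁ h₂
    rw [sub_self] at h₁ h₂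
    convert tendsto_stackedCorr hdK0 hdK0 h₁₂ h₁ h₂ using 2
    rw [Real.mul_self_sqrt hdK0.le, mul_div_mul_left _ _ (by positivity), hK_symm]
  simpa using tendsto_integral_of_dominated_convergence (fun _ => 1)
    (fun c => ((Real.measurable_arcsin.comp
      (measurable_stackedCorr hxc_meas d c t₁ t₂)).const_mul _).aestronglyMeasurable)
    (integrable_const 1)
    (fun c => ae_of_all _ fun ω => abs_two_div_pi_mul_arcsin_le_one _)
    (hcorr.mono fun ω h => ((Real.continuous_arcsin.tendsto _).comp h).const_mul _)

/-- **Theorem 1, convergence of the covariance kernel in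
expectation.** For a wide-sense stationary mean-zero process `x` with covariance
`K`, `K(0) > 0`, and i.i.d. channel copies `xc k`, the expectation
`E[(2/π) arcsin ρ_c]` converges to `(2/π) arcsin(K(r)/K(0))`, where `r = t₂ − t₁`. -/
theorem erf_kernel_expectation_tendsto
    {Ω : Type*} [MeasurableSpace Ω] (μ : Measure Ω) [IsProbabilityMeasure μ]
    (x : ℤ → Ω → ℝ) (K : ℤ → ℝ)
    (hx_meas : ∀ t, Measurable (x t))
    (hL2 : ∀ t, MemLp (x t) 2 μ)
    (hmean : ∀ t, ∫ ω, x t ω ∂μ = 0)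
    (hcov : ∀ t₁ t₂, ∫ ω, x t₁ ω * x t₂ ω ∂μ = K (t₁ - t₂))
    (hK0 : 0 < K 0)
    (xc : ℕ → ℤ → Ω → ℝ)
    (hxc_meas : ∀ k t, Measurable (xc k t))
    (hxc_indep : iIndepFun (fun k ω (t : ℤ) => xc k t ω) μ)
    (hxc_copy : ∀ k, Measure.map (fun ω (t : ℤ) => xc k t ω) μ
      = Measure.map (fun ω (t : ℤ) => x t ω) μ)
    (d : ℕ) (hd : 1 ≤ d) (t₁ t₂ : ℤ) :
    Tendsto
      (fun c : ℕ => ∫ ω, (2 / Real.pi) * Real.arcsin (stackedCorr xc d c t₁ t₂ ω) ∂μ)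
      atTop (𝓝 ((2 / Real.pi) * Real.arcsin (K (t₂ - t₁) / K 0))) :=
  erf_kernel_expectation_tendsto_general μ x K hL2 hcov hK0 xc hxc_meas hxc_indep hxc_copy d hd t₁
    t₂
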